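/- Let γ*: S¹ → S² be the constant-speed parametrization of the 2-fold covered great circle, i.e. γ*(e^{iθ}) = (cos 2θ, sin 2θ, 0). Then the loop s ↦ Θ(γ*'(s)/|γ*'(s)|) in SO(3) represents the trivial element of π₁(SO(3)) ≅ ℤ/2, whereas for the single loop E(e^{iθ}) = (cos θ, sin θ, 0) the corresponding loop in SO(3) represents the nontrivial element. -/

import Mathlib

open Real
open scoped RealInnerProductSpace

/-- Euclidean `ℝ³`. -/
abbrev E3 := EuclideanSpace ℝ (Fin 3)

/-- The unit tangent bundle `T¹S²` of the round `2`-sphere. -/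
def unitTangentS2 : Set (E3 × E3) :=
  {p | ‖p.1‖ = 1 ∧ ‖p.2‖ = 1 ∧ ⟪p.1, p.2⟫ = 0}

/-- The special orthogonal group `SO(3)` of real `3×3` matrices. -/
abbrev SO3 := Matrix.specialOrthogonalGroup (Fin 3) ℝ

/-- The unit tangent lift `s ↦ (γ(s), γ'(s)/|γ'(s)|)` of a regular curve. -/
noncomputable def tangentLift (γ : ℝ → E3) (s : ℝ) : E3 × E3 :=
  (γ s, ‖deriv γ s‖⁻¹ • deriv γ s)

/-- The constant-speed parametrization of the doubly covered equator. -/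
noncomputable def doubleLoop (θ : ℝ) : E3 :=
  (WithLp.equiv 2 (Fin 3 → ℝ)).symm ![Real.cos (2 * θ), Real.sin (2 * θ), 0]

/-- The standard parametrization of the simply covered equator. -/
noncomputable def singleLoop (θ : ℝ) : E3 :=
  (WithLp.equiv 2 (Fin 3 → ℝ)).symm ![Real.cos θ, Real.sin θ, 0]

/-!
`T¹S²` is doubly covered by the unit quaternions: `u ↦ (u 𝐢 u⁻¹, u 𝐣 u⁻¹)`, with fibres `±u`.
The unit tangent lift of the equator traversed at speed `c` is the image of the quaternion path
`θ ↦ cos (cθ/2) + sin (cθ/2) 𝐤`. For `c = 2` this path is a closed great circle of `S³`, which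
the circles of latitude towards `𝐣` contract to a point, so its image is null-homotopic. For
`c = 1` the path runs from `1` to `-1`; lifting a free null-homotopy of its image through the
covering would make it a closed path, which it is not.
-/

open Quaternion Metric

noncomputable section

theorem IsCoveringMap.lift_apply_eq_of_nullhomotopic {E X : Type*} [TopologicalSpace E]
    [TopologicalSpace X] {p : E → X} (hp : IsCoveringMap p) {G : ℝ → ℝ → X}
    (hG : Continuous fun q : ℝ × ℝ => G q.1 q.2) {T : ℝ} (hT : ∀ t, G t T = G t 0) {x : X}
    (hx : ∀ s, G 1 s = x) {γ : ℝ → E} (hγ : Continuous γ) (hγG : ∀ s, p (γ s) = G 0 s) :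
    γ T = γ 0 := by
  let H : C(unitInterval × ℝ, X) :=
    ⟨fun q => G q.1 q.2, hG.comp (continuous_subtype_val.prodMap continuous_id)⟩
  let Γ := hp.liftHomotopy H ⟨γ, hγ⟩ fun s => (hγG s).symm
  have hΓ : ∀ t s, p (Γ (t, s)) = G t s := fun t s =>
    congrFun (hp.liftHomotopy_lifts H ⟨γ, hγ⟩ _) (t, s)
  have hend : Γ (1, T) = Γ (1, 0) :=
    hp.const_of_comp (Γ.continuous.comp (Continuous.prodMk_right 1))
      (fun s s' => by
        simp only [Function.comp_apply, hΓ, Set.Icc.coe_one]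
        exact (hx s).trans (hx s').symm) T 0
  -- the two edges `t ↦ Γ (t, T)` and `t ↦ Γ (t, 0)` lift the same path and meet at `t = 1`
  have hedges : (fun t => Γ (t, T)) = fun t => Γ (t, 0) :=
    hp.eq_of_comp_eq (Γ.continuous.comp (Continuous.prodMk_left T))
      (Γ.continuous.comp (Continuous.prodMk_left 0)) (funext fun t => by simp [hΓ, hT]) 1 hend
  simpa [Γ, hp.liftHomotopy_zero] using congrFun hedges 0

section SquareRootsOfNegOne

variable {D : Type*} [DivisionRing D] {p q r : D}

lemma one_sub_mul_mul_self (hp : p * p = -1) (hq : q * q = -1) :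
    (1 - q * p) * p = q * (1 - q * p) := by
  calc (1 - q * p) * p = p - q * (p * p) := by noncomm_ring
    _ = q - (q * q) * p := by rw [hp, hq]; noncomm_ring
    _ = q * (1 - q * p) := by noncomm_ring

lemma eq_neg_of_one_sub_mul_eq_zero (hp : p * p = -1) (h : 1 - q * p = 0) : q = -p := by
  calc q = -((q * p) * p) := by rw [mul_assoc, hp]; noncomm_ring
    _ = -p := by rw [← sub_eq_zero.mp h, one_mul]

lemma one_sub_mul_commute (hrp : r * p = -(p * r)) (hrq : r * q = -(q * r)) :
    (1 - q * p) * r = r * (1 - q * p) := by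
  calc (1 - q * p) * r = r - q * (p * r) := by noncomm_ring
    _ = r - (r * q) * p := by rw [← neg_neg (p * r), ← hrp, hrq]; noncomm_ring
    _ = r * (1 - q * p) := by noncomm_ring

/-- The conjugating element is `1 - q * p`, or `r` when that vanishes, i.e. when `q = -p`. -/
lemma exists_ne_zero_mul_eq_mul (hp : p * p = -1) (hq : q * q = -1) (hr : r ≠ 0)
    (hrp : r * p = -(p * r)) :
    ∃ c ≠ 0, c * p = q * c ∧ (r * q = -(q * r) → c * r = r * c) := by
  by_cases hc : 1 - q * p = 0
  · obtain rfl := eq_neg_of_one_sub_mul_eq_zero hp hc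
    exact ⟨r, hr, by rw [hrp, neg_mul], fun _ => rfl⟩
  · exact ⟨1 - q * p, hc, one_sub_mul_mul_self hp hq, one_sub_mul_commute hrp⟩

end SquareRootsOfNegOne

def toQuat (x : E3) : ℍ := ⟨0, x 0, x 1, x 2⟩

@[simp] lemma re_toQuat (x : E3) : (toQuat x).re = 0 := rfl
@[simp] lemma imI_toQuat (x : E3) : (toQuat x).imI = x 0 := rfl
@[simp] lemma imJ_toQuat (x : E3) : (toQuat x).imJ = x 1 := rfl
@[simp] lemma imK_toQuat (x : E3) : (toQuat x).imK = x 2 := rfl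

def ofQuat (q : ℍ) : E3 := !₂[q.imI, q.imJ, q.imK]

lemma ofQuat_toQuat (x : E3) : ofQuat (toQuat x) = x := by
  ext i; fin_cases i <;> rfl

lemma toQuat_ofQuat (q : ℍ) : toQuat (ofQuat q) = q.im := rfl

lemma toQuat_injective : Function.Injective toQuat :=
  Function.LeftInverse.injective ofQuat_toQuat

lemma continuous_ofQuat : Continuous ofQuat :=
  (PiLp.continuous_toLp 2 _).comp <| continuous_pi fun i => by
    fin_cases i
    · exact continuous_imI
    · exact continuous_imJ
    · exact continuous_imK

lemma toQuat_mul_add_mul_toQuat (x y : E3) :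
    toQuat x * toQuat y + toQuat y * toQuat x = ((-2 * ⟪x, y⟫ : ℝ) : ℍ) := by
  ext <;> simp [PiLp.inner_apply, Fin.sum_univ_three] <;> ring

lemma toQuat_mul_self (x : E3) : toQuat x * toQuat x = ((-⟪x, x⟫ : ℝ) : ℍ) := by
  ext <;> simp [-inner_self_eq_norm_sq_to_K, PiLp.inner_apply, Fin.sum_univ_three] <;> ring

lemma mem_unitTangentS2_iff {x v : E3} : (x, v) ∈ unitTangentS2 ↔
    toQuat x * toQuat x = -1 ∧ toQuat v * toQuat v = -1 ∧
      toQuat x * toQuat v = -(toQuat v * toQuat x) := by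
  have hsq (y : E3) : toQuat y * toQuat y = -1 ↔ ‖y‖ = 1 := by
    rw [toQuat_mul_self, ← coe_one, ← coe_neg, coe_inj, neg_inj, real_inner_self_eq_norm_sq,
      pow_eq_one_iff_of_nonneg (norm_nonneg y) two_ne_zero]
  rw [hsq, hsq, ← add_eq_zero_iff_eq_neg, toQuat_mul_add_mul_toQuat, ← coe_zero, coe_inj]
  simp [unitTangentS2]

lemma ne_zero_of_mul_self_eq_neg_one {q : ℍ} (hq : q * q = -1) : q ≠ 0 := by
  rintro rfl; simp at hq

lemma re_mul_mul_inv (q : ℍ) {u : ℍ} (hu : u ≠ 0) : (u * q * u⁻¹).re = q.re := by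
  have hn : normSq u ≠ 0 := normSq_eq_zero.not.mpr hu
  rw [inv_def, mul_smul_comm, re_smul, smul_eq_mul, inv_mul_eq_iff_eq_mul₀ hn]
  simp only [re_mul, imI_mul, imJ_mul, imK_mul, re_star, imI_star, imJ_star, imK_star, normSq_def']
  ring

lemma conj_mul_conj {u : ℍ} (hu : u ≠ 0) (a b : ℍ) :
    u * a * u⁻¹ * (u * b * u⁻¹) = u * (a * b) * u⁻¹ := by
  simp [mul_assoc, inv_mul_cancel_left₀ hu]

lemma commute_of_conj_eq {u u' q : ℍ} (hu : u ≠ 0) (hu' : u' ≠ 0)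
    (h : u * q * u⁻¹ = u' * q * u'⁻¹) : u⁻¹ * u' * q = q * (u⁻¹ * u') := by
  calc u⁻¹ * u' * q = u⁻¹ * (u' * q * u'⁻¹) * u' := by simp [mul_assoc, inv_mul_cancel₀ hu']
    _ = q * (u⁻¹ * u') := by rw [← h]; simp [mul_assoc, inv_mul_cancel_left₀ hu]

def quatRotate (u : ℍ) (x : E3) : E3 := ofQuat (u * toQuat x * u⁻¹)

lemma toQuat_quatRotate {u : ℍ} (hu : u ≠ 0) (x : E3) :
    toQuat (quatRotate u x) = u * toQuat x * u⁻¹ := by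
  rw [quatRotate, toQuat_ofQuat]
  ext <;> simp [re_mul_mul_inv _ hu]

lemma quatRotate_eq_of_norm_eq_one {u : ℍ} (hu : ‖u‖ = 1) (x : E3) :
    quatRotate u x = ofQuat (u * toQuat x * star u) := by
  rw [quatRotate, inv_def, normSq_eq_norm_mul_self, hu]; simp

lemma quatRotate_neg (u : ℍ) (x : E3) : quatRotate (-u) x = quatRotate u x := by
  simp [quatRotate, inv_neg]

lemma quatRotate_smul {r : ℝ} (hr : r ≠ 0) (u : ℍ) (x : E3) :
    quatRotate (r • u) x = quatRotate u x := by
  have : (r : ℍ) ≠ 0 := by rwa [Ne, ← coe_zero, coe_inj]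
  simp [quatRotate, Algebra.smul_def, mul_inv_rev, mul_assoc, coe_commutes, this]

lemma quatRotate_mem {u : ℍ} (hu : u ≠ 0) {x v : E3} (h : (x, v) ∈ unitTangentS2) :
    (quatRotate u x, quatRotate u v) ∈ unitTangentS2 := by
  obtain ⟨hx, hv, hxv⟩ := mem_unitTangentS2_iff.mp h
  simp only [mem_unitTangentS2_iff, toQuat_quatRotate hu, conj_mul_conj hu, hx, hv, hxv]
  simp [mul_inv_cancel₀ hu]

def e₀ : E3 := EuclideanSpace.single 0 1

def e₁ : E3 := EuclideanSpace.single 1 1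

lemma e₀_e₁_mem : (e₀, e₁) ∈ unitTangentS2 := by
  simp [unitTangentS2, e₀, e₁, EuclideanSpace.inner_single_left]

def quatFrame (u : ℍ) : E3 × E3 := (quatRotate u e₀, quatRotate u e₁)

lemma quatFrame_mem {u : ℍ} (hu : u ≠ 0) : quatFrame u ∈ unitTangentS2 :=
  quatRotate_mem hu e₀_e₁_mem

lemma exists_quatFrame_eq {m : E3 × E3} (hm : m ∈ unitTangentS2) : ∃ u ≠ 0, quatFrame u = m := by
  obtain ⟨x, v⟩ := m
  obtain ⟨hX, hV, hXV⟩ := mem_unitTangentS2_iff.mp hm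
  obtain ⟨hI, hJ, hIJ⟩ := mem_unitTangentS2_iff.mp e₀_e₁_mem
  set X := toQuat x; set V := toQuat v; set I := toQuat e₀; set J := toQuat e₁
  obtain ⟨a, ha, haI, -⟩ := exists_ne_zero_mul_eq_mul hI hX (ne_zero_of_mul_self_eq_neg_one hJ)
    (neg_eq_iff_eq_neg.mp hIJ.symm)
  have hX_eq : X = a * I * a⁻¹ := by rw [haI, mul_inv_cancel_right₀ ha]
  set V' := a * J * a⁻¹
  have hV' : V' * V' = -1 := by simp [V', conj_mul_conj ha, hJ, mul_inv_cancel₀ ha]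
  have hXV' : X * V' = -(V' * X) := by simp [V', hX_eq, conj_mul_conj ha, hIJ]
  obtain ⟨b, hb, hbV', hbX⟩ := exists_ne_zero_mul_eq_mul hV' hV
    (ne_zero_of_mul_self_eq_neg_one hX) hXV'
  have hconj (q : ℍ) : b * a * q * (b * a)⁻¹ = b * (a * q * a⁻¹) * b⁻¹ := by
    simp [mul_inv_rev, mul_assoc]
  refine ⟨b * a, mul_ne_zero hb ha, Prod.ext (toQuat_injective ?_) (toQuat_injective ?_)⟩
  · rw [quatFrame, toQuat_quatRotate (mul_ne_zero hb ha), hconj, ← hX_eq, hbX hXV,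
      mul_inv_cancel_right₀ hb]
  · rw [quatFrame, toQuat_quatRotate (mul_ne_zero hb ha), hconj, hbV', mul_inv_cancel_right₀ hb]

lemma eq_coe_re_of_commute {w : ℍ} (hI : w * toQuat e₀ = toQuat e₀ * w)
    (hJ : w * toQuat e₁ = toQuat e₁ * w) : w = (w.re : ℍ) := by
  have hI' := congrArg (fun q : ℍ => (q.imJ, q.imK)) hI
  have hJ' := congrArg (fun q : ℍ => q.imK) hJ
  simp [e₀, e₁] at hI' hJ'
  ext <;> simp <;> linarith

lemma quatFrame_eq_quatFrame_iff {u u' : sphere (0 : ℍ) 1} :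
    quatFrame u = quatFrame u' ↔ u' = u ∨ u' = -u := by
  have hu := ne_zero_of_mem_unit_sphere u
  have hu' := ne_zero_of_mem_unit_sphere u'
  constructor
  · intro h
    have hconj (x : E3) (hx : quatRotate u x = quatRotate u' x) :=
      commute_of_conj_eq hu hu' (by simpa [toQuat_quatRotate, hu, hu'] using congrArg toQuat hx)
    have hw := eq_coe_re_of_commute (hconj e₀ (congrArg Prod.fst h))
      (hconj e₁ (congrArg Prod.snd h))
    have hre : |((u : ℍ)⁻¹ * u').re| = 1 := by
      rw [← Real.norm_eq_abs, ← norm_coe, ← hw, norm_mul, norm_inv, norm_eq_of_mem_sphere u,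
        norm_eq_of_mem_sphere u']
      simp
    have hu'_eq : (u' : ℍ) = u * (((u : ℍ)⁻¹ * u').re : ℍ) := by
      rw [← hw, mul_inv_cancel_left₀ hu]
    rcases abs_eq zero_le_one |>.mp hre with h1 | h1
    · left; ext1; simpa [h1] using hu'_eq
    · right; ext1; simpa [h1] using hu'_eq
  · rintro (rfl | rfl)
    · rfl
    · simp [quatFrame, coe_neg_sphere, quatRotate_neg]

lemma mem_zpowers_neg_one_iff {G : Type*} [Group G] [HasDistribNeg G] {g : G} :
    g ∈ Subgroup.zpowers (-1 : G) ↔ g = 1 ∨ g = -1 := by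
  refine ⟨fun ⟨k, hk⟩ => ?_, ?_⟩
  · rcases Int.even_or_odd k with h | h
    · exact .inl (hk ▸ h.neg_one_zpow)
    · exact .inr (hk ▸ h.neg_one_zpow)
  · rintro (rfl | rfl)
    · exact one_mem _
    · exact Subgroup.mem_zpowers _

def sphereFrame (u : sphere (0 : ℍ) 1) : unitTangentS2 :=
  ⟨quatFrame u, quatFrame_mem (ne_zero_of_mem_unit_sphere u)⟩

lemma continuous_sphereFrame : Continuous sphereFrame := by
  have hinv : Continuous fun u : sphere (0 : ℍ) 1 => (u : ℍ)⁻¹ :=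
    continuous_subtype_val.inv₀ ne_zero_of_mem_unit_sphere
  refine Continuous.subtype_mk (Continuous.prodMk ?_ ?_) _ <;>
    exact continuous_ofQuat.comp ((continuous_subtype_val.mul continuous_const).mul hinv)

lemma surjective_sphereFrame : Function.Surjective sphereFrame := by
  rintro ⟨m, hm⟩
  obtain ⟨u, hu, rfl⟩ := exists_quatFrame_eq hm
  have hn : ‖u‖ ≠ 0 := norm_ne_zero_iff.mpr hu
  refine ⟨⟨‖u‖⁻¹ • u, ?_⟩, Subtype.ext ?_⟩
  · simp [norm_smul, hn]
  · simp [sphereFrame, quatFrame, quatRotate_smul (inv_ne_zero hn)]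

theorem isCoveringMap_sphereFrame : IsCoveringMap sphereFrame := by
  refine ((Topology.IsQuotientMap.of_surjective_continuous surjective_sphereFrame
    continuous_sphereFrame).isQuotientCoveringMap_of_subgroup (Subgroup.zpowers (-1)) ?_
    fun {u u'} => ?_).isCoveringMap
  · refine Set.Finite.isDiscrete ((Set.toFinite {1, -1}).subset fun g hg => ?_)
    simpa using mem_zpowers_neg_one_iff.mp hg
  · rw [mem_zpowers_neg_one_iff, mul_inv_eq_one, mul_inv_eq_iff_eq_mul, neg_one_mul, sphereFrame,
      sphereFrame, Subtype.mk.injEq, quatFrame_eq_quatFrame_iff]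

lemma equator_eq (c θ : ℝ) :
    (WithLp.equiv 2 (Fin 3 → ℝ)).symm ![cos (c * θ), sin (c * θ), 0] =
      cos (c * θ) • e₀ + sin (c * θ) • e₁ := by
  ext i; fin_cases i <;> simp [e₀, e₁]

lemma norm_smul_e₀_add_smul_e₁ (a b : ℝ) : ‖a • e₀ + b • e₁‖ = √(a ^ 2 + b ^ 2) := by
  simp [EuclideanSpace.norm_eq, Fin.sum_univ_three, e₀, e₁]

lemma tangentLift_equator {c : ℝ} (hc : 0 < c) (s : ℝ) :
    tangentLift (fun θ => cos (c * θ) • e₀ + sin (c * θ) • e₁) s =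
      (cos (c * s) • e₀ + sin (c * s) • e₁, -sin (c * s) • e₀ + cos (c * s) • e₁) := by
  have hlin : HasDerivAt (fun θ : ℝ => c * θ) c s := by simpa using (hasDerivAt_id s).const_mul c
  have hd : deriv (fun θ => cos (c * θ) • e₀ + sin (c * θ) • e₁) s =
      c • (-sin (c * s) • e₀ + cos (c * s) • e₁) := by
    refine HasDerivAt.deriv ?_
    convert ((hasDerivAt_cos (c * s)).comp s hlin).smul_const e₀ |>.add
      (((hasDerivAt_sin (c * s)).comp s hlin).smul_const e₁) using 1
    · rfl
    · module
  have hn : ‖-sin (c * s) • e₀ + cos (c * s) • e₁‖ = 1 := by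
    rw [norm_smul_e₀_add_smul_e₁, neg_sq, sin_sq_add_cos_sq, sqrt_one]
  rw [tangentLift, hd, norm_smul, hn, Real.norm_of_nonneg hc.le, mul_one, smul_smul,
    inv_mul_cancel₀ hc.ne', one_smul]

/-- `capLoop 0` is the great circle `θ ↦ cos θ + sin θ 𝐤`; as `τ` grows to `π / 2`, `capLoop τ`
shrinks through parallel circles to the point `𝐣`. -/
def capLoop (τ θ : ℝ) : ℍ := ⟨cos τ * cos θ, 0, sin τ, cos τ * sin θ⟩

@[simp] lemma re_capLoop (τ θ : ℝ) : (capLoop τ θ).re = cos τ * cos θ := rfl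
@[simp] lemma imI_capLoop (τ θ : ℝ) : (capLoop τ θ).imI = 0 := rfl
@[simp] lemma imJ_capLoop (τ θ : ℝ) : (capLoop τ θ).imJ = sin τ := rfl
@[simp] lemma imK_capLoop (τ θ : ℝ) : (capLoop τ θ).imK = cos τ * sin θ := rfl

lemma norm_capLoop (τ θ : ℝ) : ‖capLoop τ θ‖ = 1 := by
  have h : normSq (capLoop τ θ) = 1 := by
    rw [normSq_def', re_capLoop, imI_capLoop, imJ_capLoop, imK_capLoop]
    linear_combination (cos τ ^ 2) * sin_sq_add_cos_sq θ + sin_sq_add_cos_sq τ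
  rw [normSq_eq_norm_mul_self] at h
  nlinarith [norm_nonneg (capLoop τ θ)]

lemma capLoop_add_two_pi (τ θ : ℝ) : capLoop τ (θ + 2 * π) = capLoop τ θ := by
  ext <;> simp [cos_add_two_pi, sin_add_two_pi]

lemma capLoop_pi_div_two (θ θ' : ℝ) : capLoop (π / 2) θ = capLoop (π / 2) θ' := by
  ext <;> simp

lemma quatFrame_capLoop_zero (θ : ℝ) :
    quatFrame (capLoop 0 θ) =
      (cos (2 * θ) • e₀ + sin (2 * θ) • e₁, -sin (2 * θ) • e₀ + cos (2 * θ) • e₁) := by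
  rw [quatFrame, quatRotate_eq_of_norm_eq_one (norm_capLoop 0 θ),
    quatRotate_eq_of_norm_eq_one (norm_capLoop 0 θ), cos_two_mul, sin_two_mul]
  refine Prod.ext ?_ ?_ <;> ext i <;> fin_cases i <;> simp [ofQuat, e₀, e₁] <;>
    nlinarith [sin_sq_add_cos_sq θ]

def sphereCapLoop (τ θ : ℝ) : sphere (0 : ℍ) 1 :=
  ⟨capLoop τ θ, mem_sphere_zero_iff_norm.2 (norm_capLoop τ θ)⟩

lemma continuous_sphereCapLoop : Continuous fun p : ℝ × ℝ => sphereCapLoop p.1 p.2 := by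
  have h : Continuous fun p : ℝ × ℝ => linearIsometryEquivTuple.symm
      !₂[cos p.1 * cos p.2, 0, sin p.1, cos p.1 * sin p.2] :=
    linearIsometryEquivTuple.symm.continuous.comp ((PiLp.continuous_toLp 2 _).comp
      (continuous_pi fun i => by fin_cases i <;> dsimp <;> fun_prop))
  exact h.subtype_mk _

lemma tangentLift_doubleLoop (s : ℝ) : tangentLift doubleLoop s = quatFrame (capLoop 0 s) := by
  have h : doubleLoop = fun θ => cos (2 * θ) • e₀ + sin (2 * θ) • e₁ := funext (equator_eq 2)
  rw [h, tangentLift_equator two_pos, quatFrame_capLoop_zero]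

lemma tangentLift_singleLoop (s : ℝ) :
    tangentLift singleLoop s = quatFrame (capLoop 0 (s / 2)) := by
  have h : singleLoop = fun θ => cos (1 * θ) • e₀ + sin (1 * θ) • e₁ :=
    funext fun θ => by rw [← equator_eq, one_mul]; rfl
  rw [h, tangentLift_equator one_pos, quatFrame_capLoop_zero, mul_div_cancel₀ s two_ne_zero,
    one_mul]

end

/-- The unit-tangent lift of the doubly covered great circle is a
null-homotopic loop in `SO(3)` (trivial class in `π₁(SO(3)) ≅ ℤ/2`), whereas
the lift of the simply covered great circle is not null-homotopic
(nontrivial class). -/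
theorem doubleLoop_trivial_singleLoop_nontrivial
    (Θ : unitTangentS2 ≃ₜ SO3)
    (hmemD : ∀ s, tangentLift doubleLoop s ∈ unitTangentS2)
    (hmemS : ∀ s, tangentLift singleLoop s ∈ unitTangentS2) :
    (∃ G : ℝ → ℝ → SO3,
      (Continuous fun p : ℝ × ℝ => G p.1 p.2) ∧
      (∀ t, Function.Periodic (G t) (2 * π)) ∧
      (∀ s, G 0 s = Θ ⟨tangentLift doubleLoop s, hmemD s⟩) ∧
      (∃ A : SO3, ∀ s, G 1 s = A)) ∧
    ¬ (∃ G : ℝ → ℝ → SO3,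
      (Continuous fun p : ℝ × ℝ => G p.1 p.2) ∧
      (∀ t, Function.Periodic (G t) (2 * π)) ∧
      (∀ s, G 0 s = Θ ⟨tangentLift singleLoop s, hmemS s⟩) ∧
      (∃ A : SO3, ∀ s, G 1 s = A)) := by
  constructor
  · refine ⟨fun t s => Θ (sphereFrame (sphereCapLoop (π * t / 2) s)), ?_, fun t s => ?_,
      fun s => ?_, Θ (sphereFrame (sphereCapLoop (π / 2) 0)), fun s => ?_⟩
    · have h : Continuous fun p : ℝ × ℝ => (π * p.1 / 2, p.2) := by fun_prop
      exact Θ.continuous.comp (continuous_sphereFrame.comp (continuous_sphereCapLoop.comp h))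
    · simp only [sphereCapLoop, capLoop_add_two_pi]
    · simp only [sphereCapLoop, sphereFrame, mul_zero, zero_div, tangentLift_doubleLoop]
    · simp only [sphereCapLoop, mul_one, capLoop_pi_div_two s 0]
  · rintro ⟨G, hGc, hGp, hG0, A, hG1⟩
    have hclosed := (isCoveringMap_sphereFrame.homeomorph_comp Θ).lift_apply_eq_of_nullhomotopic
      hGc (fun t => by simpa using hGp t 0) hG1
      (continuous_sphereCapLoop.comp (by fun_prop : Continuous fun s : ℝ => ((0 : ℝ), s / 2)))
      (fun s => by
        simp only [Function.comp_apply, hG0, sphereFrame, sphereCapLoop, tangentLift_singleLoop])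
    have hre := congrArg (fun u : sphere (0 : ℍ) 1 => (u : ℍ).re) hclosed
    norm_num [sphereCapLoop] at hre
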